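/- Let $w$ be an infinite binary word. Then $w$ contains a circular $4$-power; that is, there exist words $x_1, t, x_2$ with $x_2 x_1$ nonempty such that $x_1 t x_2$ is a factor of $w$ and $x_2 x_1$ is a $4$-power (a word of the form $z^4$ for some nonempty word $z$). -/

import Mathlib

/-!
Every binary word of length 4 contains a square `z z` (two equal adjacent letters, or `abab`).
By pigeonhole some block of length 4 occurs in `w` at two disjoint positions, so `w` has a factor
`z z t z z`; taking `x₁ = x₂ = z z` gives the circular 4-power `x₂ x₁ = z z z z`.
-/

/-- `u` occurs as a factor of the infinite word `w` (at some position `i`). -/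
def FactorOf {α : Type*} (u : List α) (w : ℕ → α) : Prop :=
  ∃ i : ℕ, u = (List.range u.length).map (fun k => w (i + k))

namespace InfiniteWord

variable {α : Type*}

def window (w : ℕ → α) (i n : ℕ) : List α :=
  (List.range n).map (fun k => w (i + k))

@[simp]
lemma length_window (w : ℕ → α) (i n : ℕ) : (window w i n).length = n := by
  simp [window]

lemma window_add (w : ℕ → α) (i m n : ℕ) :
    window w i (m + n) = window w i m ++ window w (i + m) n := by
  simp only [window, List.range_add, List.map_append, List.map_map]
  congr 1
  exact List.map_congr_left fun k _ => by simp [Function.comp, Nat.add_assoc]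

lemma exists_window_eq [Finite α] (w : ℕ → α) (n : ℕ) :
    ∃ i j, i + n ≤ j ∧ window w i n = window w j n := by
  obtain ⟨k, l, hkl, h⟩ := Finite.exists_ne_map_eq_of_infinite
    fun k : ℕ => fun m : Fin n => w (n * k + m)
  wlog hlt : k < l generalizing k l
  · exact this l k hkl.symm h.symm (by omega)
  refine ⟨n * k, n * l, ?_, List.map_congr_left fun m hm => congrFun h ⟨m, List.mem_range.1 hm⟩⟩
  calc n * k + n = n * (k + 1) := by ring
    _ ≤ n * l := Nat.mul_le_mul_left n hlt

lemma exists_factorOf_append_append_of_window_eq {w : ℕ → α} {i j n : ℕ} (hij : i + n ≤ j)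
    (h : window w i n = window w j n) :
    ∃ t, FactorOf (window w i n ++ t ++ window w i n) w := by
  refine ⟨window w (i + n) (j - (i + n)), i, ?_⟩
  have hj : i + n + (j - (i + n)) = j := by omega
  rw [List.length_append, List.length_append, length_window, length_window]
  change _ = window w i _
  rw [window_add, window_add, ← Nat.add_assoc, hj, ← h]

end InfiniteWord

namespace FactorOf

open InfiniteWord

variable {α : Type*}

lemma of_infix {w : ℕ → α} {u v : List α} (hvu : v <:+: u) (hu : FactorOf u w) :
    FactorOf v w := by
  obtain ⟨s, r, rfl⟩ := hvu
  obtain ⟨i, hi⟩ := hu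
  change _ = window w i _ at hi
  rw [List.length_append, List.length_append, window_add, window_add] at hi
  have hsv := List.append_inj_left' hi (by simp)
  exact ⟨i + s.length, (List.append_inj hsv (by simp)).2⟩

lemma exists_append_append_of_infix {w : ℕ → α} {u v t : List α} (hvu : v <:+: u)
    (h : FactorOf (u ++ t ++ u) w) : ∃ t', FactorOf (v ++ t' ++ v) w := by
  obtain ⟨s, r, rfl⟩ := hvu
  exact ⟨r ++ t ++ s, of_infix ⟨s, r, by simp⟩ h⟩

end FactorOf

lemma List.exists_square_infix_of_length_eq_four {u : List (Fin 2)} (hu : u.length = 4) :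
    ∃ z ≠ [], z ++ z <:+: u := by
  obtain ⟨a, b, c, d, rfl⟩ := List.length_eq_four.1 hu
  have : a = b ∨ b = c ∨ c = d ∨ (a = c ∧ b = d) := by revert a b c d; decide
  rcases this with rfl | rfl | rfl | ⟨rfl, rfl⟩
  · exact ⟨[a], by simp, [], [c, d], rfl⟩
  · exact ⟨[b], by simp, [a], [d], rfl⟩
  · exact ⟨[c], by simp, [a, b], [], rfl⟩
  · exact ⟨[a, b], by simp, [], [], rfl⟩

theorem infinite_binary_contains_circular_fourth_power (w : ℕ → Fin 2) :
    ∃ x₁ t x₂ z : List (Fin 2), z ≠ [] ∧ FactorOf (x₁ ++ t ++ x₂) w ∧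
      x₂ ++ x₁ = z ++ z ++ z ++ z := by
  obtain ⟨i, j, hij, hwin⟩ := InfiniteWord.exists_window_eq w 4
  obtain ⟨t, ht⟩ := InfiniteWord.exists_factorOf_append_append_of_window_eq hij hwin
  obtain ⟨z, hz, hzz⟩ :=
    List.exists_square_infix_of_length_eq_four (InfiniteWord.length_window w i 4)
  obtain ⟨t', ht'⟩ := FactorOf.exists_append_append_of_infix hzz ht
  exact ⟨z ++ z, t', z ++ z, z, hz, ht', by simp⟩
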